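/- Conflicting Move edits delete the overridden move's source: for pairwise distinct i, j, k, applying Move[i, j] then Move[i, k] yields the same document as applying Move[i, k] then Conv[j, del]. -/

import Mathlib

/-- Atomic types of document components. -/
inductive Ty where
  | num | str | bool | del
deriving DecidableEq, Repr

/-- A document is a tuple (list) of atomic types. -/
abbrev Doc := List Ty

/-- Edit operations (1-based indices). `ins i t p` inserts type `t` at index `i`
    (with unique identifier `p`), shifting indices ≥ i right; `conv i t` sets the
    type at index `i` to `t`; `move i j` sets index `i` to the type at index `j`
    and sets index `j` to the tombstone `del`. -/
inductive Edit where
  | id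
  | ins (i : ℕ) (t : Ty) (p : ℕ)
  | conv (i : ℕ) (t : Ty)
  | move (i j : ℕ)
deriving DecidableEq, Repr

/-- Partial action of an edit on a document (1-based indices). -/
def Edit.apply : Edit → Doc → Option Doc
  | .id, d => some d
  | .ins i t _, d =>
      if 1 ≤ i ∧ i ≤ d.length + 1 then
        some (d.take (i-1) ++ t :: d.drop (i-1))
      else none
  | .conv i t, d =>
      if 1 ≤ i ∧ i ≤ d.length then some (d.set (i-1) t) else none
  | .move i j, d =>
      if 1 ≤ i ∧ i ≤ d.length ∧ 1 ≤ j ∧ j ≤ d.length ∧ i ≠ j then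
        some ((d.set (i-1) (d.getD (j-1) .del)).set (j-1) .del)
      else none

/-! The overriding move writes the old entry `k` into `i` on both sides, so the first move's
write to `i` is lost and only its tombstone at `j` survives; the remaining writes are to distinct
positions and commute. -/

namespace List

variable {α : Type*}

def move (l : List α) (i j : ℕ) (x : α) : List α :=
  (l.set i (l.getD j x)).set j x

theorem getD_move_of_ne {l : List α} {i j k : ℕ} (hki : k ≠ i) (hkj : k ≠ j) (x y : α) :
    (l.move i j x).getD k y = l.getD k y := by
  simp only [move, getD_eq_getElem?_getD, getElem?_set_ne hkj.symm, getElem?_set_ne hki.symm]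

theorem move_move_of_ne {l : List α} {i j k : ℕ} (hij : i ≠ j) (hik : i ≠ k) (hjk : j ≠ k)
    (x : α) : (l.move i j x).move i k x = (l.move i k x).set j x := by
  rw [move, getD_move_of_ne hik.symm hjk.symm, move, move, set_comm _ _ hij, set_set,
    set_comm _ _ hij.symm, set_comm _ _ hjk]

end List

namespace Edit

theorem move_apply_eq_some {i j : ℕ} {d r : Doc} :
    (move i j).apply d = some r ↔
      (1 ≤ i ∧ i ≤ d.length ∧ 1 ≤ j ∧ j ≤ d.length ∧ i ≠ j) ∧ d.move (i - 1) (j - 1) .del = r := by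
  simp only [apply, List.move, Option.ite_none_right_eq_some, Option.some.injEq]

theorem conv_apply_eq_some {i : ℕ} {t : Ty} {d r : Doc} :
    (conv i t).apply d = some r ↔ (1 ≤ i ∧ i ≤ d.length) ∧ d.set (i - 1) t = r := by
  simp only [apply, Option.ite_none_right_eq_some, Option.some.injEq]

end Edit

theorem move_move_conflict_general (i j k : ℕ) (hjk : j ≠ k)
    (d r₁ r₂ : Doc)
    (h₁ : ((Edit.move i j).apply d >>= (Edit.move i k).apply) = some r₁)
    (h₂ : ((Edit.move i k).apply d >>= (Edit.conv j Ty.del).apply) = some r₂) :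
    r₁ = r₂ := by
  simp only [Option.bind_eq_bind, Option.bind_eq_some_iff, Edit.move_apply_eq_some,
    Edit.conv_apply_eq_some] at h₁ h₂
  obtain ⟨_, ⟨⟨hi, -, hj, -, hij⟩, rfl⟩, ⟨-, -, hk, -, hik⟩, rfl⟩ := h₁
  obtain ⟨_, ⟨-, rfl⟩, -, rfl⟩ := h₂
  exact List.move_move_of_ne (by omega) (by omega) (by omega) _

/-- conflicting moves delete the overridden move's source: for pairwise
distinct `i, j, k`, applying `Move[i,j]` then `Move[i,k]` yields the same document
as applying `Move[i,k]` then `Conv[j,del]`. -/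
theorem move_move_conflict (i j k : ℕ) (hij : i ≠ j) (hik : i ≠ k) (hjk : j ≠ k)
    (d r₁ r₂ : Doc)
    (h₁ : ((Edit.move i j).apply d >>= (Edit.move i k).apply) = some r₁)
    (h₂ : ((Edit.move i k).apply d >>= (Edit.conv j Ty.del).apply) = some r₂) :
    r₁ = r₂ :=
  move_move_conflict_general i j k hjk d r₁ r₂ h₁ h₂
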